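/- Rank–Purity Duality (combinatorial core): Let p be prime, k, m ≥ 0, and M a k×m matrix over F_p. For any function φ : F_p^k → F_p, define ρ(x,x') = p^(−(k+m)) · ∑_{y ∈ F_p^m} χ(φ(x) − φ(x') + (x − x')ᵀ M y) for x, x' ∈ F_p^k. Then ∑_{x,x' ∈ F_p^k} |ρ(x,x')|² = p^(−rank M). -/

import Mathlib

open Finset

/-- The standard additive character of `ZMod p`. -/
noncomputable def chi (p : ℕ) (z : ZMod p) : ℂ :=
  Complex.exp (2 * Real.pi * Complex.I * (z.val : ℂ) / (p : ℂ))

/-- Matrix element of the reduced density matrix of a quadratic phase state. -/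
noncomputable def rho (p : ℕ) [NeZero p] (k m : ℕ)
    (M : Matrix (Fin k) (Fin m) (ZMod p))
    (phi : (Fin k → ZMod p) → ZMod p) (x x' : Fin k → ZMod p) : ℂ :=
  (p : ℂ) ^ (-((k : ℤ) + (m : ℤ))) *
    ∑ y : Fin m → ZMod p,
      chi p (phi x - phi x' + ∑ i, ∑ j, (x i - x' i) * M i j * y j)

lemma chi_eq_std (p : ℕ) [NeZero p] (z : ZMod p) : chi p z = ZMod.stdAddChar z := by
  rw [chi, ZMod.stdAddChar_apply, ZMod.toCircle_apply]

lemma addchar_map_sum {A R : Type*} [AddCommMonoid A] [CommMonoid R] (ψ : AddChar A R)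
    {ι : Type*} (s : Finset ι) (f : ι → A) :
    ψ (∑ i ∈ s, f i) = ∏ i ∈ s, ψ (f i) := by
  induction s using Finset.cons_induction with
  | empty => simp
  | cons a s ha ih => rw [Finset.sum_cons, Finset.prod_cons, AddChar.map_add_eq_mul, ih]

theorem rank_purity_duality (p : ℕ) [Fact p.Prime] (k m : ℕ)
    (M : Matrix (Fin k) (Fin m) (ZMod p))
    (phi : (Fin k → ZMod p) → ZMod p) :
    ∑ x : Fin k → ZMod p, ∑ x' : Fin k → ZMod p,
        ‖rho p k m M phi x x'‖ ^ 2
      = (p : ℝ) ^ (-(M.rank : ℤ)) := by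
  classical
  have hp : p.Prime := Fact.out
  haveI : NeZero p := ⟨hp.ne_zero⟩
  have hp0 : (p : ℝ) ≠ 0 := Nat.cast_ne_zero.2 hp.ne_zero
  -- character sum over all y
  have hsum : ∀ c : Fin m → ZMod p,
      ∑ y : Fin m → ZMod p, ZMod.stdAddChar (∑ j, c j * y j)
        = if c = 0 then (p : ℂ) ^ m else 0 := by
    intro c
    calc ∑ y : Fin m → ZMod p, ZMod.stdAddChar (∑ j, c j * y j)
        = ∑ y : Fin m → ZMod p, ∏ j, ZMod.stdAddChar (c j * y j) := by
          simp_rw [addchar_map_sum]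
      _ = ∑ y ∈ Fintype.piFinset (fun _ : Fin m => (univ : Finset (ZMod p))),
            ∏ j, ZMod.stdAddChar (c j * y j) := by rw [Fintype.piFinset_univ]
      _ = ∏ j, ∑ t : ZMod p, ZMod.stdAddChar (c j * t) :=
          Finset.sum_prod_piFinset univ fun j t => ZMod.stdAddChar (c j * t)
      _ = ∏ j, (if c j = 0 then (p : ℂ) else 0) := by
          refine Finset.prod_congr rfl fun j _ => ?_
          simp_rw [mul_comm (c j)]
          rw [AddChar.sum_mulShift _ (ZMod.isPrimitive_stdAddChar p), ZMod.card]; split_ifs <;> simp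
      _ = if c = 0 then (p : ℂ) ^ m else 0 := by
          by_cases hc : c = 0
          · simp [hc, Finset.prod_const, Finset.card_univ]
          · obtain ⟨j, hj⟩ := Function.ne_iff.mp hc
            rw [if_neg hc]
            exact Finset.prod_eq_zero (Finset.mem_univ j) (by simp at hj ⊢; simp [hj])
  -- per-pair absolute value
  have key : ∀ x x' : Fin k → ZMod p,
      ‖rho p k m M phi x x'‖ ^ 2
        = if Matrix.vecMul (x - x') M = 0 then (p : ℝ) ^ (-(2 * (k : ℤ))) else 0 := by
    intro x x'
    have hc : ∀ y : Fin m → ZMod p,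
        ∑ i, ∑ j, (x i - x' i) * M i j * y j = ∑ j, (Matrix.vecMul (x - x') M) j * y j := by
      intro y
      rw [Finset.sum_comm]
      refine Finset.sum_congr rfl fun j _ => ?_
      have : (Matrix.vecMul (x - x') M) j = ∑ i, (x i - x' i) * M i j := by
        simp [Matrix.vecMul, dotProduct, sub_mul, Finset.sum_sub_distrib]
      rw [this, Finset.sum_mul]
    rw [rho]
    simp_rw [hc, chi_eq_std, AddChar.map_add_eq_mul, ← Finset.mul_sum]
    rw [hsum (Matrix.vecMul (x - x') M)]
    rw [norm_mul, norm_mul]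
    have habs1 : ‖(ZMod.stdAddChar (phi x - phi x') : ℂ)‖ = 1 := by
      rw [ZMod.stdAddChar_apply]; exact Circle.norm_coe _
    have habs2 : ‖(p : ℂ) ^ (-((k : ℤ) + (m : ℤ)))‖
        = (p : ℝ) ^ (-((k : ℤ) + (m : ℤ))) := by
      rw [norm_zpow, Complex.norm_natCast]
    by_cases h : Matrix.vecMul (x - x') M = 0
    · rw [if_pos h, if_pos h, habs1, habs2, one_mul, norm_pow, Complex.norm_natCast]
      rw [← zpow_natCast (p : ℝ) m, ← zpow_add₀ hp0, sq, ← zpow_add₀ hp0]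
      congr 1; ring
    · rw [if_neg h, if_neg h]
      simp
  simp_rw [key]
  -- change of variables in the inner sum
  have hinner : ∀ x : Fin k → ZMod p,
      (∑ x' : Fin k → ZMod p, if Matrix.vecMul (x - x') M = 0 then (p : ℝ) ^ (-(2 * (k : ℤ))) else 0)
        = ∑ v : Fin k → ZMod p, if Matrix.vecMul v M = 0 then (p : ℝ) ^ (-(2 * (k : ℤ))) else 0 := by
    intro x
    exact Fintype.sum_equiv (Equiv.subLeft x) _ _ fun x' => rfl
  rw [Finset.sum_congr rfl fun x _ => hinner x, Finset.sum_const, Finset.card_univ,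
    Fintype.card_fun, ZMod.card, Fintype.card_fin]
  -- count the kernel
  set K := LinearMap.ker (M.transpose.mulVecLin) with hK
  have hmem : ∀ v : Fin k → ZMod p, Matrix.vecMul v M = 0 ↔ v ∈ K := by
    intro v
    rw [hK, LinearMap.mem_ker, Matrix.mulVecLin_apply, Matrix.mulVec_transpose]
  have hcard : (univ.filter fun v : Fin k → ZMod p => Matrix.vecMul v M = 0).card
      = Fintype.card K := by
    rw [← Fintype.card_subtype]
    exact Fintype.card_congr (Equiv.subtypeEquivRight hmem)
  have hcount : (∑ v : Fin k → ZMod p,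
        if Matrix.vecMul v M = 0 then (p : ℝ) ^ (-(2 * (k : ℤ))) else 0)
      = (Fintype.card K : ℝ) * (p : ℝ) ^ (-(2 * (k : ℤ))) := by
    rw [Finset.sum_ite, Finset.sum_const, Finset.sum_const_zero, add_zero, nsmul_eq_mul, hcard]
  rw [hcount]
  have hcardK : Fintype.card K = p ^ (Module.finrank (ZMod p) K) := by
    rw [Module.card_eq_pow_finrank (K := ZMod p) (V := K), ZMod.card]
  have hrk : M.rank + Module.finrank (ZMod p) K = k := by
    have h1 := LinearMap.finrank_range_add_finrank_ker (M.transpose.mulVecLin)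
    have h2 : Module.finrank (ZMod p) (LinearMap.range M.transpose.mulVecLin) = M.rank := by
      rw [show Module.finrank (ZMod p) (LinearMap.range M.transpose.mulVecLin)
          = M.transpose.rank from rfl]
      exact Matrix.rank_transpose M
    rw [h2, ← hK] at h1
    simpa using h1
  rw [hcardK, nsmul_eq_mul]
  push_cast
  rw [← zpow_natCast (p : ℝ) k, ← zpow_natCast (p : ℝ) (Module.finrank (ZMod p) K),
    ← zpow_add₀ hp0, ← zpow_add₀ hp0]
  congr 1
  omega
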